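/- Consider gradient flow on L_lin(W, v) = Σ_{i=1}^n ℓ(y_i, v^T W^T x_i) with logistic loss ℓ(y, ŷ) = 2 log(1 + exp(−y ŷ)). Suppose there exists a unit vector z with y_i⟨z, x_i⟩ ≥ γ > 0 for all i, and suppose y_i v^T W^T x_i ≥ 0 for all i. Then dL_lin/dt ≤ −(1/4)‖v‖² γ² L_lin². -/

import Mathlib

/-!
Write `rᵢ = -∂ℓ/∂ŷ (yᵢ, ŷᵢ)` for the logistic residuals and `A = Σᵢ rᵢ xᵢ`. The flow moves `W`
along `A vᵀ` and `v` along `Wᵀ A`, so `ŷᵢ = xᵢᵀ W v` changes at rate `⟨xᵢ, ‖v‖² A + W Wᵀ A⟩` and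
`dL/dt = -Σᵢ rᵢ ŷᵢ' = -(‖v‖² ‖A‖² + ‖Wᵀ A‖²)`. With `eᵢ = exp (-yᵢ ŷᵢ) ≤ 1` we have
`rᵢ = yᵢ · 2eᵢ/(1+eᵢ)` and `2e/(1+e) ≥ log (1+e)` on `[0, 1]`, so the margin direction gives
`⟨z, A⟩ ≥ γ Σᵢ 2eᵢ/(1+eᵢ) ≥ γ L / 2`, and Cauchy–Schwarz turns this into `‖A‖² ≥ γ² L² / 4`.
-/

open Finset Matrix Real

noncomputable def logisticLoss (y ŷ : ℝ) : ℝ := 2 * log (1 + exp (-(y * ŷ)))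

noncomputable def logisticResidual (y ŷ : ℝ) : ℝ :=
  2 * y * exp (-(y * ŷ)) / (1 + exp (-(y * ŷ)))

lemma log_one_add_le_two_mul_div_one_add {u : ℝ} (h0 : 0 ≤ u) (h1 : u ≤ 1) :
    log (1 + u) ≤ 2 * u / (1 + u) := by
  have hpos : 0 < 1 + u := by linarith
  calc log (1 + u) ≤ u := by linarith [log_le_sub_one_of_pos hpos]
    _ ≤ 2 * u / (1 + u) := by rw [le_div_iff₀ hpos]; nlinarith

lemma logisticLoss_nonneg (y ŷ : ℝ) : 0 ≤ logisticLoss y ŷ :=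
  mul_nonneg zero_le_two (log_nonneg (by linarith [exp_pos (-(y * ŷ))]))

lemma hasDerivAt_logisticLoss (y ŷ : ℝ) :
    HasDerivAt (logisticLoss y) (-logisticResidual y ŷ) ŷ := by
  have hexp : HasDerivAt (fun s => 1 + exp (-(y * s))) (exp (-(y * ŷ)) * -y) ŷ := by
    simpa using (((hasDerivAt_id ŷ).const_mul y).neg.exp).const_add 1
  refine ((hexp.log (by positivity)).const_mul 2).congr_deriv ?_
  rw [logisticResidual]
  ring

lemma mul_logisticLoss_le {γ y ŷ u : ℝ} (hγ : 0 ≤ γ) (hŷ : 0 ≤ y * ŷ) (hu : γ ≤ y * u) :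
    γ * logisticLoss y ŷ ≤ 2 * (logisticResidual y ŷ * u) := by
  set e := exp (-(y * ŷ))
  have he : e ≤ 1 := exp_le_one_iff.mpr (by linarith)
  have hw := log_one_add_le_two_mul_div_one_add (exp_pos _).le he
  have hw0 : 0 ≤ 2 * e / (1 + e) := by positivity
  have hres : logisticResidual y ŷ * u = 2 * e / (1 + e) * (y * u) := by
    unfold logisticResidual; ring
  rw [hres, logisticLoss]
  nlinarith [mul_le_mul_of_nonneg_left hu hw0, mul_le_mul_of_nonneg_left hw hγ]

variable {ι κ σ : Type*}

noncomputable def logisticResidualSum [Fintype σ] (x : σ → ι → ℝ) (y ŷ : σ → ℝ) : ι → ℝ :=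
  ∑ i, logisticResidual (y i) (ŷ i) • x i

lemma hasDerivAt_dotProduct_mulVec [Fintype ι] [Fintype κ] (a : ι → ℝ)
    {W : ℝ → Matrix ι κ ℝ} {v : ℝ → κ → ℝ} {W' : Matrix ι κ ℝ} {v' : κ → ℝ} {t : ℝ}
    (hW : ∀ i k, HasDerivAt (fun s => W s i k) (W' i k) t)
    (hv : ∀ k, HasDerivAt (fun s => v s k) (v' k) t) :
    HasDerivAt (fun s => a ⬝ᵥ W s *ᵥ v s) (a ⬝ᵥ (W' *ᵥ v t + W t *ᵥ v')) t := by
  simp only [dotProduct, mulVec, Pi.add_apply, ← sum_add_distrib]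
  refine HasDerivAt.fun_sum fun i _ => ?_
  exact (HasDerivAt.fun_sum fun k _ => (hW i k).mul (hv k)).const_mul (a i)

lemma dotProduct_vecMulVec_mulVec_add_mulVec_vecMul [Fintype ι] [Fintype κ] (A : ι → ℝ)
    (W : Matrix ι κ ℝ) (v : κ → ℝ) :
    A ⬝ᵥ (vecMulVec A v *ᵥ v + W *ᵥ (A ᵥ* W)) = (v ⬝ᵥ v) * (A ⬝ᵥ A) + (A ᵥ* W) ⬝ᵥ (A ᵥ* W) := by
  rw [dotProduct_add, dotProduct_mulVec A W, vecMulVec_mulVec]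
  simp [dotProduct_smul]

lemma sum_mul_mul_eq_vecMulVec [Fintype σ] (r : σ → ℝ) (x : σ → ι → ℝ)
    (v : κ → ℝ) (i : ι) (k : κ) :
    ∑ j, r j * x j i * v k = vecMulVec (∑ j, r j • x j) v i k := by
  simp [vecMulVec_apply, Finset.sum_apply, sum_mul]

lemma sum_mul_sum_mul_eq_vecMul [Fintype ι] [Fintype σ] (r : σ → ℝ) (x : σ → ι → ℝ)
    (W : Matrix ι κ ℝ) (k : κ) :
    ∑ j, r j * ∑ i, x j i * W i k = ((∑ j, r j • x j) ᵥ* W) k := by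
  simp only [vecMul, dotProduct, Finset.sum_apply, Pi.smul_apply, smul_eq_mul, sum_mul, mul_sum]
  rw [sum_comm]
  simp only [mul_assoc]

lemma logisticResidualSum_dotProduct [Fintype ι] [Fintype σ] (x : σ → ι → ℝ) (y ŷ : σ → ℝ)
    (u : ι → ℝ) :
    logisticResidualSum x y ŷ ⬝ᵥ u = ∑ i, logisticResidual (y i) (ŷ i) * (x i ⬝ᵥ u) := by
  simp only [logisticResidualSum, sum_dotProduct, smul_dotProduct, smul_eq_mul]

lemma sq_mul_sum_logisticLoss_le [Fintype ι] [Fintype σ] {x : σ → ι → ℝ} {y ŷ : σ → ℝ}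
    {z : ι → ℝ} {γ : ℝ} (hγ : 0 ≤ γ) (hz : z ⬝ᵥ z = 1) (hmargin : ∀ i, γ ≤ y i * (z ⬝ᵥ x i))
    (hŷ : ∀ i, 0 ≤ y i * ŷ i) :
    (γ * ∑ i, logisticLoss (y i) (ŷ i)) ^ 2
      ≤ 4 * (logisticResidualSum x y ŷ ⬝ᵥ logisticResidualSum x y ŷ) := by
  set A := logisticResidualSum x y ŷ
  have hmarg : γ * ∑ i, logisticLoss (y i) (ŷ i) ≤ 2 * (z ⬝ᵥ A) := by
    rw [dotProduct_comm, logisticResidualSum_dotProduct, mul_sum, mul_sum]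
    refine sum_le_sum fun i _ => ?_
    rw [dotProduct_comm]
    exact mul_logisticLoss_le hγ (hŷ i) (hmargin i)
  have hCS : (z ⬝ᵥ A) ^ 2 ≤ (z ⬝ᵥ z) * (A ⬝ᵥ A) := by
    simpa only [dotProduct, sq] using sum_mul_sq_le_sq_mul_sq univ z A
  have hL0 : 0 ≤ γ * ∑ i, logisticLoss (y i) (ŷ i) :=
    mul_nonneg hγ (sum_nonneg fun i _ => logisticLoss_nonneg (y i) (ŷ i))
  rw [hz, one_mul] at hCS
  nlinarith

lemma hasDerivAt_sum_logisticLoss_of_gradientFlow [Fintype ι] [Fintype κ] [Fintype σ]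
    (x : σ → ι → ℝ) (y : σ → ℝ) {W : ℝ → Matrix ι κ ℝ} {v : ℝ → κ → ℝ} {t : ℝ} {A : ι → ℝ}
    (hA : A = logisticResidualSum x y fun i => x i ⬝ᵥ W t *ᵥ v t)
    (hW : ∀ d k, HasDerivAt (fun s => W s d k) (vecMulVec A (v t) d k) t)
    (hv : ∀ k, HasDerivAt (fun s => v s k) ((A ᵥ* W t) k) t) :
    HasDerivAt (fun s => ∑ i, logisticLoss (y i) (x i ⬝ᵥ W s *ᵥ v s))
      (-((v t ⬝ᵥ v t) * (A ⬝ᵥ A) + (A ᵥ* W t) ⬝ᵥ (A ᵥ* W t))) t := by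
  refine (HasDerivAt.fun_sum fun i _ => (hasDerivAt_logisticLoss _ _).comp t
    (hasDerivAt_dotProduct_mulVec (x i) hW hv)).congr_deriv ?_
  have hsum := logisticResidualSum_dotProduct x y (fun i => x i ⬝ᵥ W t *ᵥ v t)
    (vecMulVec A (v t) *ᵥ v t + W t *ᵥ (A ᵥ* W t))
  rw [← hA] at hsum
  rw [← dotProduct_vecMulVec_mulVec_add_mulVec_vecMul, hsum]
  simp only [neg_mul, sum_neg_distrib]

theorem linear_net_logistic_loss_decrease_general {D h n : ℕ}
    (x : Fin n → Fin D → ℝ) (y : Fin n → ℝ)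
    (γ : ℝ) (hγ : 0 < γ) (z : Fin D → ℝ) (hz : ∑ d, (z d) ^ 2 = 1)
    (hmargin : ∀ i, γ ≤ y i * ∑ d, z d * x i d)
    (W : ℝ → Matrix (Fin D) (Fin h) ℝ) (v : ℝ → Fin h → ℝ)
    (f : ℝ → Fin n → ℝ)
    (hf : ∀ t i, f t i = ∑ d, x i d * (W t).mulVec (v t) d)
    (L : ℝ → ℝ)
    (hL : ∀ t, L t = ∑ i, 2 * Real.log (1 + Real.exp (-(y i * f t i))))
    (t : ℝ)
    (hnonneg : ∀ i, 0 ≤ y i * f t i)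
    (hW : ∀ d k, HasDerivAt (fun s => W s d k)
        (∑ i, 2 * y i * Real.exp (-(y i * f t i)) / (1 + Real.exp (-(y i * f t i)))
          * x i d * v t k) t)
    (hv : ∀ k, HasDerivAt (fun s => v s k)
        (∑ i, 2 * y i * Real.exp (-(y i * f t i)) / (1 + Real.exp (-(y i * f t i)))
          * (∑ d, x i d * W t d k)) t) :
    deriv L t ≤ -(1 / 4 * (∑ k, (v t k) ^ 2) * γ ^ 2 * (L t) ^ 2) := by
  obtain rfl : f = fun s i => x i ⬝ᵥ W s *ᵥ v s := funext₂ hf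
  obtain rfl : L = fun s => ∑ i, logisticLoss (y i) (x i ⬝ᵥ W s *ᵥ v s) := funext hL
  set A := logisticResidualSum x y fun i => x i ⬝ᵥ W t *ᵥ v t
  have hflow := hasDerivAt_sum_logisticLoss_of_gradientFlow x y rfl
    (fun d k => sum_mul_mul_eq_vecMulVec _ x (v t) d k ▸ hW d k)
    (fun k => sum_mul_sum_mul_eq_vecMul _ x (W t) k ▸ hv k)
  have hbound := sq_mul_sum_logisticLoss_le hγ.le (by simpa only [dotProduct, sq] using hz)
    hmargin hnonneg
  have hvv : ∑ k, v t k ^ 2 = v t ⬝ᵥ v t := by simp only [dotProduct, sq]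
  have hvv0 : 0 ≤ v t ⬝ᵥ v t := sum_nonneg fun _ _ => mul_self_nonneg _
  have hWA0 : 0 ≤ (A ᵥ* W t) ⬝ᵥ (A ᵥ* W t) := sum_nonneg fun _ _ => mul_self_nonneg _
  beta_reduce at hbound ⊢
  rw [hflow.deriv, hvv]
  nlinarith [mul_le_mul_of_nonneg_left hbound hvv0]

/-- Gradient flow on the linear-network logistic loss L(W,v) = Σᵢ 2 log(1 + exp(−yᵢ vᵀWᵀxᵢ)):
    with margin γ and nonnegative margins yᵢ vᵀWᵀxᵢ ≥ 0, dL/dt ≤ −(1/4)‖v‖²γ²L². -/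
theorem linear_net_logistic_loss_decrease {D h n : ℕ}
    (x : Fin n → Fin D → ℝ) (y : Fin n → ℝ)
    (hy : ∀ i, y i = 1 ∨ y i = -1)
    (γ : ℝ) (hγ : 0 < γ) (z : Fin D → ℝ) (hz : ∑ d, (z d) ^ 2 = 1)
    (hmargin : ∀ i, γ ≤ y i * ∑ d, z d * x i d)
    (W : ℝ → Matrix (Fin D) (Fin h) ℝ) (v : ℝ → Fin h → ℝ)
    (f : ℝ → Fin n → ℝ)
    (hf : ∀ t i, f t i = ∑ d, x i d * (W t).mulVec (v t) d)
    (L : ℝ → ℝ)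
    (hL : ∀ t, L t = ∑ i, 2 * Real.log (1 + Real.exp (-(y i * f t i))))
    (t : ℝ)
    (hnonneg : ∀ i, 0 ≤ y i * f t i)
    (hW : ∀ d k, HasDerivAt (fun s => W s d k)
        (∑ i, 2 * y i * Real.exp (-(y i * f t i)) / (1 + Real.exp (-(y i * f t i)))
          * x i d * v t k) t)
    (hv : ∀ k, HasDerivAt (fun s => v s k)
        (∑ i, 2 * y i * Real.exp (-(y i * f t i)) / (1 + Real.exp (-(y i * f t i)))
          * (∑ d, x i d * W t d k)) t) :
    deriv L t ≤ -(1 / 4 * (∑ k, (v t k) ^ 2) * γ ^ 2 * (L t) ^ 2) :=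
  linear_net_logistic_loss_decrease_general x y γ hγ z hz hmargin W v f hf L hL t hnonneg hW hv
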